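/- arXiv:2011.09593 — 4 statements merged into one kernel-verified Lean document; each statement's English description precedes it below -/
import Mathlib

section
/- For every natural number n, the centered period-4 alternating window sum of row 2n of Pascal's triangle with offset 2 equals 2^n: Σ_{k∈ℤ} [ C(2n, n + 4k) − C(2n, n + 2 + 4k) ] = 2^n. -/
/-!
Write `S_r(a) = ∑ₖ C(r, a + 4k)`. Pascal's rule applied twice gives
`S_{2n+2}(n+1) - S_{2n+2}(n+3) = (S_{2n}(n-1) - S_{2n}(n+3)) + 2 (S_{2n}(n) - S_{2n}(n+2))`,
and the first bracket vanishes because `S_r` is `4`-periodic in `a`. So the difference doubles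
from `n` to `n + 1`, starting from `1` at `n = 0`.
-/

/-- Binomial coefficient `C(r, j)` with an integer lower index, equal to `0`
when `j < 0` or `j > r`. -/
def zchoose (r : ℕ) (j : ℤ) : ℤ := if 0 ≤ j then (r.choose j.toNat : ℤ) else 0

open Function

lemma zchoose_eq_zero_of_notMem_Icc {r : ℕ} {j : ℤ} (h : j ∉ Set.Icc 0 (r : ℤ)) :
    zchoose r j = 0 := by
  unfold zchoose
  split_ifs with h0
  · have : r < j.toNat := by simp only [Set.mem_Icc, not_and, not_le] at h; omega
    simp [Nat.choose_eq_zero_of_lt this]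
  · rfl

lemma finite_support_zchoose (r : ℕ) : (support (zchoose r)).Finite :=
  (Set.finite_Icc 0 (r : ℤ)).subset fun _ hj =>
    by_contra fun h => hj (zchoose_eq_zero_of_notMem_Icc h)

lemma zchoose_succ (r : ℕ) (j : ℤ) :
    zchoose (r + 1) j = zchoose r (j - 1) + zchoose r j := by
  rcases lt_trichotomy j 0 with h | rfl | h
  · simp only [zchoose, if_neg h.not_ge, if_neg (show ¬ (0 : ℤ) ≤ j - 1 by omega), add_zero]
  · simp [zchoose]
  · have hj : j.toNat = (j - 1).toNat + 1 := by omega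
    simp only [zchoose, h.le, show (0 : ℤ) ≤ j - 1 by omega, if_true, hj, Nat.choose_succ_succ]
    push_cast
    ring

noncomputable def windowSum (r : ℕ) (m a : ℤ) : ℤ := ∑ᶠ k : ℤ, zchoose r (a + m * k)

section windowSum

variable {m : ℤ}

lemma finite_support_zchoose_affine (hm : m ≠ 0) (r : ℕ) (a : ℤ) :
    (support fun k : ℤ => zchoose r (a + m * k)).Finite :=
  (finite_support_zchoose r).preimage fun _ _ _ _ h => by simpa [hm] using h

lemma windowSum_add_period (r : ℕ) (m a : ℤ) : windowSum r m (a + m) = windowSum r m a := by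
  calc ∑ᶠ k : ℤ, zchoose r (a + m + m * k) = ∑ᶠ k : ℤ, zchoose r (a + m * (k + 1)) :=
        finsum_congr fun k => congrArg _ (by ring)
    _ = windowSum r m a :=
        finsum_comp_equiv (Equiv.addRight (1 : ℤ)) (f := fun k => zchoose r (a + m * k))

lemma windowSum_succ (hm : m ≠ 0) (r : ℕ) (a : ℤ) :
    windowSum (r + 1) m a = windowSum r m (a - 1) + windowSum r m a := by
  unfold windowSum
  rw [← finsum_add_distrib (finite_support_zchoose_affine hm r _)
    (finite_support_zchoose_affine hm r _)]
  simp only [zchoose_succ, sub_add_eq_add_sub]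

lemma windowSum_add_two (hm : m ≠ 0) (r : ℕ) (a : ℤ) :
    windowSum (r + 2) m (a + 1) =
      windowSum r m (a - 1) + 2 * windowSum r m a + windowSum r m (a + 1) := by
  simp only [windowSum_succ hm, add_sub_cancel_right]
  ring

end windowSum

lemma windowSum_four_sub_eq_two_pow (n : ℕ) :
    windowSum (2 * n) 4 n - windowSum (2 * n) 4 (n + 2) = 2 ^ n := by
  induction n with
  | zero =>
    have h₀ : windowSum 0 4 0 = 1 := by
      rw [windowSum, finsum_eq_single _ 0 fun k hk => zchoose_eq_zero_of_notMem_Icc (by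
        simp only [Set.mem_Icc]; omega)]
      rfl
    have h₂ : windowSum 0 4 2 = 0 :=
      finsum_eq_zero_of_forall_eq_zero fun k => zchoose_eq_zero_of_notMem_Icc (by
        simp only [Set.mem_Icc]; omega)
    simp [h₀, h₂]
  | succ n ih =>
    have hS := windowSum_add_two (by norm_num : (4 : ℤ) ≠ 0) (2 * n)
    rw [show 2 * (n + 1) = 2 * n + 2 by ring, Nat.cast_succ, hS,
      show (n : ℤ) + 1 + 2 = n + 2 + 1 by ring, hS,
      show (n : ℤ) + 2 - 1 = n + 1 by ring,
      show (n : ℤ) + 2 + 1 = n - 1 + 4 by ring, windowSum_add_period, pow_succ, ← ih]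
    ring

/-- The centered period-4 alternating window sum of row 2n of Pascal's triangle with
offset 2 equals 2^n. -/
theorem period_four_window_sum_offset_two (n : ℕ) :
    ∑ᶠ k : ℤ, (zchoose (2 * n) (n + 4 * k) - zchoose (2 * n) (n + 2 + 4 * k)) =
      2 ^ n := by
  rw [finsum_sub_distrib (finite_support_zchoose_affine four_ne_zero _ _)
    (finite_support_zchoose_affine four_ne_zero _ _)]
  exact windowSum_four_sub_eq_two_pow n
end

section
/- For every natural number n ≥ 1, the centered period-5 alternating window sum of row 2n of Pascal's triangle with offset 1 equals the Fibonacci number of index 2n−1: Σ_{k∈ℤ} [ C(2n, n + 5k) − C(2n, n + 1 + 5k) ] = Fib(2n−1). -/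
lemma zchoose_eq_zero_of_neg (r : ℕ) {j : ℤ} (h : j < 0) : zchoose r j = 0 := by
  simp [zchoose, not_le.2 h]

lemma zchoose_eq_zero_of_gt (r : ℕ) {j : ℤ} (h : (r : ℤ) < j) : zchoose r j = 0 := by
  have h0 : 0 ≤ j := le_trans (Int.ofNat_nonneg r) h.le
  simp only [zchoose, if_pos h0]
  have : r < j.toNat := by omega
  simp [Nat.choose_eq_zero_of_lt this]

lemma zchoose_pascal (r : ℕ) (j : ℤ) :
    zchoose (r + 1) j = zchoose r j + zchoose r (j - 1) := by
  rcases lt_or_ge j 0 with h | h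
  · rw [zchoose_eq_zero_of_neg _ h, zchoose_eq_zero_of_neg _ h,
      zchoose_eq_zero_of_neg _ (by omega)]; ring
  rcases eq_or_lt_of_le h with h0 | h0
  · simp [zchoose, ← h0]
  · have h1 : (0:ℤ) ≤ j - 1 := by omega
    simp only [zchoose, if_pos h, if_pos h1]
    have hj : j.toNat = (j-1).toNat + 1 := by omega
    rw [hj, Nat.choose_succ_succ']
    push_cast; ring

/-- Period-5 window sum of row `r` with offset `a`. -/
noncomputable def S (r : ℕ) (a : ℤ) : ℤ := ∑ᶠ k : ℤ, zchoose r (a + 5 * k)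

lemma S_support (r : ℕ) (a : ℤ) :
    (Function.support fun k : ℤ => zchoose r (a + 5 * k)).Finite := by
  apply Set.Finite.subset (Set.finite_Icc (-(|a| + r)) (|a| + r))
  intro k hk
  simp only [Function.mem_support] at hk
  have h1 : 0 ≤ a + 5 * k := by
    by_contra h; exact hk (zchoose_eq_zero_of_neg _ (by omega))
  have h2 : a + 5 * k ≤ r := by
    by_contra h; exact hk (zchoose_eq_zero_of_gt _ (by omega))
  simp only [Set.mem_Icc]
  have := abs_nonneg a
  have := neg_abs_le a
  have := le_abs_self a
  omega

lemma S_shift (r : ℕ) (a : ℤ) : S r (a + 5) = S r a := by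
  unfold S
  rw [← finsum_comp_equiv (Equiv.addRight (1:ℤ)) (f := fun k => zchoose r (a + 5 * k))]
  apply finsum_congr
  intro k
  simp only [Equiv.coe_addRight]
  ring_nf

lemma S_pascal (r : ℕ) (a : ℤ) : S (r + 1) a = S r a + S r (a - 1) := by
  unfold S
  rw [← finsum_add_distrib (S_support r a) (S_support r (a-1))]
  apply finsum_congr
  intro k
  rw [zchoose_pascal]
  ring_nf

lemma S_pascal2 (r : ℕ) (a : ℤ) :
    S (r + 2) a = S r a + 2 * S r (a - 1) + S r (a - 2) := by
  have : r + 2 = (r + 1) + 1 := rfl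
  rw [this, S_pascal, S_pascal, S_pascal]
  have : a - 1 - 1 = a - 2 := by ring
  rw [this]; ring

lemma S_two (a : ℤ) (ha : 0 ≤ a) (ha4 : a ≤ 4) : S 2 a = zchoose 2 a := by
  unfold S
  rw [finsum_eq_single _ (0:ℤ)]
  · norm_num
  · intro k hk
    rcases lt_or_ge (a + 5 * k) 0 with h | h
    · exact zchoose_eq_zero_of_neg _ h
    · exact zchoose_eq_zero_of_gt _ (by omega)

lemma S_pascal2' (r : ℕ) (a b c : ℤ) (hb : b = a - 1) (hc : c = a - 2) :
    S (r + 2) a = S r a + 2 * S r b + S r c := by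
  subst hb; subst hc; exact S_pascal2 r a

lemma main_rec (m : ℕ) :
    S (2 * (m+1)) ((m:ℤ)+1) - S (2 * (m+1)) ((m:ℤ)+2) = Nat.fib (2*m+1) ∧
    S (2 * (m+1)) ((m:ℤ)) - S (2 * (m+1)) ((m:ℤ)+3) = Nat.fib (2*m+2) := by
  induction m with
  | zero =>
    constructor
    · show S 2 1 - S 2 2 = 1
      rw [S_two 1 (by norm_num) (by norm_num), S_two 2 (by norm_num) (by norm_num)]
      simp [zchoose]
    · show S 2 0 - S 2 3 = 1
      rw [S_two 0 (by norm_num) (by norm_num), S_two 3 (by norm_num) (by norm_num)]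
      simp [zchoose]
  | succ m ih =>
    obtain ⟨hA, hB⟩ := ih
    have e1 : S (2*(m+1)+2) ((m:ℤ)+2) =
        S (2*(m+1)) ((m:ℤ)+2) + 2 * S (2*(m+1)) ((m:ℤ)+1) + S (2*(m+1)) ((m:ℤ)) :=
      S_pascal2' _ _ _ _ (by ring) (by ring)
    have e2 : S (2*(m+1)+2) ((m:ℤ)+3) =
        S (2*(m+1)) ((m:ℤ)+3) + 2 * S (2*(m+1)) ((m:ℤ)+2) + S (2*(m+1)) ((m:ℤ)+1) :=
      S_pascal2' _ _ _ _ (by ring) (by ring)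
    have e3 : S (2*(m+1)+2) ((m:ℤ)+1) =
        S (2*(m+1)) ((m:ℤ)+1) + 2 * S (2*(m+1)) ((m:ℤ)) + S (2*(m+1)) ((m:ℤ)-1) :=
      S_pascal2' _ _ _ _ (by ring) (by ring)
    have e4 : S (2*(m+1)+2) ((m:ℤ)+4) =
        S (2*(m+1)) ((m:ℤ)+4) + 2 * S (2*(m+1)) ((m:ℤ)+3) + S (2*(m+1)) ((m:ℤ)+2) :=
      S_pascal2' _ _ _ _ (by ring) (by ring)
    have es : S (2*(m+1)) ((m:ℤ)-1) = S (2*(m+1)) ((m:ℤ)+4) := by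
      have := S_shift (2*(m+1)) ((m:ℤ)-1)
      rw [show (m:ℤ)-1+5 = (m:ℤ)+4 by ring] at this
      exact this.symm
    have fib3 : Nat.fib (2*m+3) = Nat.fib (2*m+1) + Nat.fib (2*m+2) := by
      rw [show 2*m+3 = (2*m+1)+2 by ring, Nat.fib_add_two]
    have fib4 : Nat.fib (2*m+4) = Nat.fib (2*m+2) + Nat.fib (2*m+3) := by
      rw [show 2*m+4 = (2*m+2)+2 by ring]; exact Nat.fib_add_two
    have hc : ∀ a : ℤ, S (2*(m+1+1)) a = S (2*(m+1)+2) a := by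
      intro a; congr 1
    constructor
    · show S (2*(m+1+1)) ((m:ℤ)+1+1) - S (2*(m+1+1)) ((m:ℤ)+1+2) = (Nat.fib (2*(m+1)+1) : ℤ)
      rw [show ((m:ℤ)+1+1) = (m:ℤ)+2 by ring, show ((m:ℤ)+1+2) = (m:ℤ)+3 by ring,
        show 2*(m+1)+1 = 2*m+3 by ring, hc, hc, e1, e2, fib3]
      push_cast
      rw [← hA, ← hB]; ring
    · show S (2*(m+1+1)) ((m:ℤ)+1) - S (2*(m+1+1)) ((m:ℤ)+1+3) = (Nat.fib (2*(m+1)+2) : ℤ)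
      rw [show ((m:ℤ)+1+3) = (m:ℤ)+4 by ring, show 2*(m+1)+2 = 2*m+4 by ring,
        hc, hc, e3, e4, es, fib4, fib3]
      push_cast
      rw [← hA, ← hB]; ring

/-- For n ≥ 1, the centered period-5 alternating window sum of row 2n of Pascal's
triangle with offset 1 equals the Fibonacci number Fib(2n−1). -/
theorem period_five_window_sum_offset_one (n : ℕ) (hn : 1 ≤ n) :
    ∑ᶠ k : ℤ, (zchoose (2 * n) (n + 5 * k) - zchoose (2 * n) (n + 1 + 5 * k)) =
      (Nat.fib (2 * n - 1) : ℤ) := by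
  obtain ⟨m, rfl⟩ : ∃ m, n = m + 1 := ⟨n - 1, by omega⟩
  have hsum : ∑ᶠ k : ℤ, (zchoose (2 * (m+1)) (((m:ℕ):ℤ) + 1 + 5 * k)
      - zchoose (2 * (m+1)) (((m:ℕ):ℤ) + 1 + 1 + 5 * k))
      = S (2*(m+1)) ((m:ℤ)+1) - S (2*(m+1)) ((m:ℤ)+2) := by
    unfold S
    rw [finsum_sub_distrib (S_support _ _) (S_support _ _)]
    congr 1
  push_cast
  rw [hsum, show 2*(m+1)-1 = 2*m+1 by omega, (main_rec m).1]
end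

section
/- For every natural number n ≥ 1, the centered period-5 alternating window sum of row n of the 3-Pascal triangle with offset 1 equals the Fibonacci number of index n−1: Σ_{j∈ℤ} [ T(n, 5j) − T(n, 5j + 1) ] = Fib(n−1). -/
open Polynomial in
/-- Trinomial coefficient `T(n, k)`: the coefficient of `x^(n+k)` in `(1 + x + x²)^n`
over `ℤ` (the entries of the 3-Pascal triangle), with `T(n, k) = 0` for `|k| > n`. -/
noncomputable def trinom (n : ℕ) (k : ℤ) : ℤ :=
  if 0 ≤ (n : ℤ) + k then ((1 + X + X ^ 2 : Polynomial ℤ) ^ n).coeff ((n : ℤ) + k).toNat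
  else 0

open Polynomial

lemma coeff_trin_mul (q : Polynomial ℤ) (m : ℕ) :
    ((1 + X + X ^ 2) * q).coeff m =
      q.coeff m + (if 1 ≤ m then q.coeff (m - 1) else 0)
        + (if 2 ≤ m then q.coeff (m - 2) else 0) := by
  have h1 : ((1 + X + X ^ 2) * q) = q * 1 + q * X ^ 1 + q * X ^ 2 := by ring
  rw [h1, coeff_add, coeff_add, coeff_mul_X_pow', coeff_mul_X_pow', mul_one]

lemma trinom_rec (n : ℕ) (k : ℤ) :
    trinom (n + 1) k = trinom n (k - 1) + trinom n k + trinom n (k + 1) := by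
  unfold trinom
  by_cases h : 0 ≤ (n : ℤ) + 1 + k
  · have hp : ((1 + X + X ^ 2 : Polynomial ℤ) ^ (n + 1)) =
        (1 + X + X ^ 2) * (1 + X + X ^ 2) ^ n := by ring
    have key := coeff_trin_mul ((1 + X + X ^ 2 : Polynomial ℤ) ^ n) ((n : ℤ) + 1 + k).toNat
    rw [show ((n : ℕ) + 1 : ℕ) + k = (n : ℤ) + 1 + k by push_cast; ring] at *
    rw [if_pos h, hp, key]
    by_cases h2 : 0 ≤ (n : ℤ) + (k - 1)
    · rw [if_pos h2, if_pos (by omega : 0 ≤ (n : ℤ) + k), if_pos (by omega : 0 ≤ (n : ℤ) + (k + 1))]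
      rw [if_pos (by omega : 1 ≤ ((n : ℤ) + 1 + k).toNat), if_pos (by omega : 2 ≤ ((n : ℤ) + 1 + k).toNat)]
      have e1 : ((n : ℤ) + 1 + k).toNat - 2 = ((n : ℤ) + (k - 1)).toNat := by omega
      have e2 : ((n : ℤ) + 1 + k).toNat - 1 = ((n : ℤ) + k).toNat := by omega
      have e3 : ((n : ℤ) + 1 + k).toNat = ((n : ℤ) + (k + 1)).toNat := by omega
      rw [e1, e2, e3]; ring
    · rw [if_neg h2, if_pos (by omega : 0 ≤ (n : ℤ) + (k + 1))]
      by_cases h3 : 0 ≤ (n : ℤ) + k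
      · rw [if_pos h3, if_pos (by omega : 1 ≤ ((n : ℤ) + 1 + k).toNat),
          if_neg (by omega : ¬ 2 ≤ ((n : ℤ) + 1 + k).toNat)]
        have e2 : ((n : ℤ) + 1 + k).toNat - 1 = ((n : ℤ) + k).toNat := by omega
        have e3 : ((n : ℤ) + 1 + k).toNat = ((n : ℤ) + (k + 1)).toNat := by omega
        rw [e2, e3]; ring
      · rw [if_neg h3, if_neg (by omega : ¬ 1 ≤ ((n : ℤ) + 1 + k).toNat),
          if_neg (by omega : ¬ 2 ≤ ((n : ℤ) + 1 + k).toNat)]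
        have e3 : ((n : ℤ) + 1 + k).toNat = ((n : ℤ) + (k + 1)).toNat := by omega
        rw [e3]; ring
  · rw [show ((n : ℕ) + 1 : ℕ) + k = (n : ℤ) + 1 + k by push_cast; ring]
    rw [if_neg h, if_neg (by omega : ¬ 0 ≤ (n : ℤ) + (k - 1)),
      if_neg (by omega : ¬ 0 ≤ (n : ℤ) + k), if_neg (by omega : ¬ 0 ≤ (n : ℤ) + (k + 1))]
    ring

lemma trinom_bounds {n : ℕ} {k : ℤ} (h : trinom n k ≠ 0) : -(n : ℤ) ≤ k ∧ k ≤ n := by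
  constructor
  · by_contra hc
    exact h (by unfold trinom; rw [if_neg (by omega)])
  · by_contra hc
    push_neg at hc
    apply h
    unfold trinom
    rw [if_pos (by omega)]
    rw [Polynomial.coeff_eq_zero_of_natDegree_lt]
    have hd : ((1 + X + X ^ 2 : Polynomial ℤ)).natDegree ≤ 2 := by compute_degree
    calc ((1 + X + X ^ 2 : Polynomial ℤ) ^ n).natDegree ≤ n * (1 + X + X ^ 2 : Polynomial ℤ).natDegree :=
        Polynomial.natDegree_pow_le
      _ ≤ n * 2 := Nat.mul_le_mul_left n hd
      _ < ((n : ℤ) + k).toNat := by omega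

lemma trinom_supp_fin (n : ℕ) (r : ℤ) :
    (Function.support fun j : ℤ => trinom n (5 * j + r)).Finite := by
  obtain ⟨m, hm1, hm2⟩ : ∃ m : ℤ, -m ≤ r ∧ r ≤ m := ⟨|r|, neg_abs_le r, le_abs_self r⟩
  apply Set.Finite.subset (Set.finite_Icc (-((n : ℤ) + m)) ((n : ℤ) + m))
  intro j hj
  obtain ⟨h1, h2⟩ := trinom_bounds hj
  simp only [Set.mem_Icc]
  omega

lemma trinom_supp_fin_sub (n : ℕ) (r s : ℤ) :
    (Function.support fun j : ℤ => trinom n (5 * j + r) - trinom n (5 * j + s)).Finite := by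
  apply Set.Finite.subset ((trinom_supp_fin n r).union (trinom_supp_fin n s))
  intro j hj
  by_contra hc
  simp only [Set.mem_union, Function.mem_support, not_or, not_not] at hc
  exact hj (by simp [Function.mem_support] at hj ⊢; omega)

noncomputable def A (n : ℕ) (r : ℤ) : ℤ := ∑ᶠ j : ℤ, trinom n (5 * j + r)
noncomputable def P (n : ℕ) : ℤ := ∑ᶠ j : ℤ, (trinom n (5 * j) - trinom n (5 * j + 1))
noncomputable def Q (n : ℕ) : ℤ := ∑ᶠ j : ℤ, (trinom n (5 * j + 4) - trinom n (5 * j + 2))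

lemma A_sub (n : ℕ) (r s : ℤ) :
    ∑ᶠ j : ℤ, (trinom n (5 * j + r) - trinom n (5 * j + s)) = A n r - A n s :=
  finsum_sub_distrib (trinom_supp_fin n r) (trinom_supp_fin n s)

lemma A_shift (n : ℕ) (r : ℤ) : A n (r + 5) = A n r := by
  unfold A
  have := finsum_comp_equiv (Equiv.addRight (1 : ℤ))
    (f := fun j : ℤ => trinom n (5 * j + r))
  rw [← this]
  apply finsum_congr
  intro j
  simp only [Equiv.coe_addRight]
  rw [show 5 * (j + 1) + r = 5 * j + (r + 5) by ring]

lemma P_eq (n : ℕ) : P n = A n 0 - A n 1 := by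
  rw [← A_sub]
  unfold P
  apply finsum_congr fun j => by rw [add_zero]

lemma Q_eq (n : ℕ) : Q n = A n 4 - A n 2 := A_sub n 4 2

lemma P_succ (n : ℕ) : P (n + 1) = Q n := by
  have step : ∀ j : ℤ, trinom (n + 1) (5 * j) - trinom (n + 1) (5 * j + 1)
      = trinom n (5 * j + -1) - trinom n (5 * j + 2) := by
    intro j
    rw [trinom_rec, trinom_rec]
    rw [show 5 * j - 1 = 5 * j + -1 by ring, show 5 * j + 1 - 1 = 5 * j by ring,
      show 5 * j + 1 + 1 = 5 * j + 2 by ring]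
    ring
  unfold P
  simp only [step]
  rw [A_sub, Q_eq, show (4 : ℤ) = -1 + 5 by norm_num, A_shift]

lemma Q_succ (n : ℕ) : Q (n + 1) = P n + Q n := by
  have step : ∀ j : ℤ, trinom (n + 1) (5 * j + 4) - trinom (n + 1) (5 * j + 2)
      = (trinom n (5 * j + 5) - trinom n (5 * j + 1))
        + (trinom n (5 * j + 4) - trinom n (5 * j + 2)) := by
    intro j
    rw [trinom_rec, trinom_rec]
    rw [show 5 * j + 4 - 1 = 5 * j + 3 by ring, show 5 * j + 4 + 1 = 5 * j + 5 by ring,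
      show 5 * j + 2 - 1 = 5 * j + 1 by ring, show 5 * j + 2 + 1 = 5 * j + 3 by ring]
    ring
  unfold Q
  simp only [step]
  rw [finsum_add_distrib (trinom_supp_fin_sub n 5 1) (trinom_supp_fin_sub n 4 2),
    A_sub, A_sub, P_eq, show (5 : ℤ) = 0 + 5 by norm_num, A_shift]

lemma trinom_zero (k : ℤ) : trinom 0 k = if k = 0 then 1 else 0 := by
  unfold trinom
  rcases eq_or_ne k 0 with rfl | hk
  · simp
  · by_cases h : 0 ≤ (0 : ℕ) + k
    · rw [if_pos h, if_neg hk]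
      simp only [pow_zero, Polynomial.coeff_one]
      rw [if_neg (by omega)]
    · rw [if_neg h, if_neg hk]

lemma P_zero : P 0 = 1 := by
  unfold P
  rw [finsum_eq_single _ (0 : ℤ)]
  · simp [trinom_zero]
  · intro j hj
    rw [trinom_zero, trinom_zero, if_neg (by omega), if_neg (by omega)]
    ring

lemma Q_zero : Q 0 = 0 := by
  unfold Q
  apply finsum_eq_zero_of_forall_eq_zero
  intro j
  rw [trinom_zero, trinom_zero, if_neg (by omega), if_neg (by omega)]
  ring

lemma Q_fib : ∀ n : ℕ, Q n = Nat.fib n ∧ Q (n + 1) = Nat.fib (n + 1) := by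
  intro n
  induction n with
  | zero =>
    constructor
    · simp [Q_zero]
    · rw [Q_succ, P_zero, Q_zero]; simp
  | succ m ih =>
    refine ⟨ih.2, ?_⟩
    rw [Q_succ, P_succ, ih.1, ih.2, Nat.fib_add_two]
    push_cast; ring

/-- For n ≥ 1, the centered period-5 alternating window sum of row n of the 3-Pascal
triangle with offset 1 equals the Fibonacci number Fib(n−1). -/
theorem trinomial_period_five_window_sum_offset_one (n : ℕ) (hn : 1 ≤ n) :
    ∑ᶠ j : ℤ, (trinom n (5 * j) - trinom n (5 * j + 1)) = (Nat.fib (n - 1) : ℤ) := by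
  obtain ⟨m, rfl⟩ : ∃ m, n = m + 1 := ⟨n - 1, by omega⟩
  have : P (m + 1) = Nat.fib m := by rw [P_succ, (Q_fib m).1]
  simpa [P] using this
end

section
/- For every natural number n and every sequence of polynomials F' : ℕ → ℤ[q] satisfying F'(0) = 0, F'(1) = 1, and F'(k+2) = F'(k+1) + q^{k}·F'(k) for all k (a second q-deformation of the Fibonacci numbers), the modified q-Euler characteristic for N = 5 with partition 5 = 2 + 3 and Rogers–Ramanujan exponents equals F'(2n+1); explicitly, as polynomials in ℤ[q]: Σ_{i∈ℤ} (−1)^i · q^{(5i² − i)/2} · [2n choose c(i)]_q = F'(2n+1), where the column function is c(2j) = n + 5j and c(2j + 1) = n + 2 + 5j for j ∈ ℤ. -/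
/-!
Group the terms `i = 2j` and `i = 2j + 1` of the sum. Let `A_n(j)` be this pair on row `2n`
and `B_n(j)` the analogous pair on row `2n + 1`, with columns `n + 5j` and `n + 3 + 5j`. The
two q-Pascal rules give, termwise in `j`,
  `A_{n+1} = B_n + q^(2n+1) A_n`  and  `B_{n+1} = A_{n+1} + q^(2n+2) B_n + h_n(j) - h_n(j+1)`
with `h_n(j) = q^(10j² - 6j + n + 2) [2n+1 choose n - 1 + 5j]_q`. Summed over `j` the last
part telescopes away, so `Σ A_n` and `Σ B_n` interleave into a solution of the recursion
of `F'` with the same initial values: `Σ A_n = F'(2n+1)` and `Σ B_n = F'(2n+2)`.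

After multiplying by `q^(k(k-1)/2)`, `[m choose k]_q` becomes the generating polynomial of the
sums of `k`-subsets of `{0, …, m-1}`; the two Pascal rules then come from splitting the
`k`-subsets of `{0, …, m}` by whether they contain `m`, respectively `0`.
-/

open Polynomial

/-- The Gaussian binomial coefficient `[n choose k]_q` as a polynomial in `ℤ[q]`:
the sum over `k`-element subsets `S` of `{0, 1, …, n−1}` of
`q^((Σ_{s∈S} s) − k(k−1)/2)`. -/
noncomputable def gaussBinom (n k : ℕ) : Polynomial ℤ :=
  ∑ S ∈ (Finset.range n).powersetCard k, X ^ ((∑ s ∈ S, s) - k * (k - 1) / 2)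

/-- The Gaussian binomial coefficient with an integer lower index, equal to `0`
when `j < 0` or `j > n`. -/
noncomputable def gaussBinomZ (n : ℕ) (j : ℤ) : Polynomial ℤ :=
  if 0 ≤ j then gaussBinom n j.toNat else 0

/-- The column function `c`: `c(2j) = n + r·j` and `c(2j + 1) = n + off + r·j`. -/
def colFun (n : ℕ) (r off : ℤ) (i : ℤ) : ℤ :=
  if Even i then (n : ℤ) + r * (i / 2) else (n : ℤ) + off + r * ((i - 1) / 2)

open Finset Function

lemma Finset.sum_range_card_le_sum (S : Finset ℕ) : ∑ i ∈ range #S, i ≤ ∑ s ∈ S, s := by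
  have h := sum_range_le_sum (s := S.map Nat.castEmbedding) (c := 0) (by simp)
  simp only [card_map, zero_add, sum_map, Nat.castEmbedding_apply] at h
  rw [← Nat.cast_sum, ← Nat.cast_sum] at h
  exact_mod_cast h

noncomputable def subsetSumPoly (s : Finset ℕ) (k : ℕ) : ℤ[X] :=
  ∑ S ∈ s.powersetCard k, X ^ ∑ i ∈ S, i

lemma subsetSumPoly_insert {s : Finset ℕ} {a : ℕ} (ha : a ∉ s) (k : ℕ) :
    subsetSumPoly (insert a s) (k + 1) = subsetSumPoly s (k + 1) + X ^ a * subsetSumPoly s k := by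
  have hdisj : Disjoint (s.powersetCard (k + 1)) ((s.powersetCard k).image (insert a)) := by
    simp only [disjoint_left, mem_powersetCard, mem_image, not_exists, not_and]
    rintro _ ⟨hsub, -⟩ T - rfl
    exact ha (hsub (mem_insert_self a T))
  have hinj : Set.InjOn (insert a) (s.powersetCard k : Set (Finset ℕ)) := fun T hT U hU h => by
    simp only [mem_coe, mem_powersetCard] at hT hU
    rw [← erase_insert (fun h => ha (hT.1 h)), ← erase_insert (fun h => ha (hU.1 h)), h]
  rw [subsetSumPoly, powersetCard_succ_insert ha, sum_union hdisj, sum_image hinj, subsetSumPoly,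
    subsetSumPoly, mul_sum]
  congr 1
  refine sum_congr rfl fun T hT => ?_
  rw [sum_insert fun h => ha ((mem_powersetCard.mp hT).1 h), pow_add]

lemma subsetSumPoly_map_succ (s : Finset ℕ) (k : ℕ) :
    subsetSumPoly (s.map ⟨(· + 1), add_left_injective 1⟩) k = X ^ k * subsetSumPoly s k := by
  rw [subsetSumPoly, powersetCard_map, sum_map, subsetSumPoly, mul_sum]
  refine sum_congr rfl fun T hT => ?_
  simp [sum_add_distrib, (mem_powersetCard.mp hT).2, pow_add, mul_comm]

lemma X_pow_mul_gaussBinom (m k : ℕ) :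
    X ^ (k * (k - 1) / 2) * gaussBinom m k = subsetSumPoly (range m) k := by
  rw [gaussBinom, subsetSumPoly, mul_sum]
  refine sum_congr rfl fun S hS => ?_
  have hmin := sum_range_card_le_sum S
  rw [(mem_powersetCard.mp hS).2, sum_range_id] at hmin
  rw [← pow_add, Nat.add_sub_cancel' hmin]

lemma gaussBinom_zero_right (m : ℕ) : gaussBinom m 0 = 1 := by
  simp [gaussBinom]

lemma gaussBinom_eq_zero {m k : ℕ} (h : m < k) : gaussBinom m k = 0 := by
  rw [gaussBinom, powersetCard_eq_empty.mpr (by rwa [card_range]), sum_empty]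

lemma gaussBinom_succ_succ (m k : ℕ) :
    gaussBinom (m + 1) (k + 1) = gaussBinom m (k + 1) + X ^ (m - k) * gaussBinom m k := by
  refine mul_left_cancel₀ (pow_ne_zero ((k + 1) * (k + 1 - 1) / 2) X_ne_zero) ?_
  rcases le_or_gt k m with hkm | hkm
  · have h0 := X_pow_mul_gaussBinom m k
    have h1 := X_pow_mul_gaussBinom m (k + 1)
    rw [X_pow_mul_gaussBinom, range_add_one, subsetSumPoly_insert notMem_range_self, ← h0, ← h1,
      Nat.triangle_succ]
    obtain ⟨d, rfl⟩ := Nat.exists_eq_add_of_le hkm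
    rw [Nat.add_sub_cancel_left]
    ring
  · rw [gaussBinom_eq_zero hkm, gaussBinom_eq_zero (by omega : m + 1 < k + 1),
      gaussBinom_eq_zero (by omega : m < k + 1)]
    ring

lemma gaussBinom_succ_succ' (m k : ℕ) :
    gaussBinom (m + 1) (k + 1) = X ^ (k + 1) * gaussBinom m (k + 1) + gaussBinom m k := by
  refine mul_left_cancel₀ (pow_ne_zero ((k + 1) * (k + 1 - 1) / 2) X_ne_zero) ?_
  have h0 := X_pow_mul_gaussBinom m k
  have h1 := X_pow_mul_gaussBinom m (k + 1)
  rw [X_pow_mul_gaussBinom, range_add_one', subsetSumPoly_insert (by simp),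
    subsetSumPoly_map_succ, subsetSumPoly_map_succ, ← h0, ← h1, Nat.triangle_succ]
  ring

lemma gaussBinomZ_natCast (M K : ℕ) : gaussBinomZ M K = gaussBinom M K := by
  simp [gaussBinomZ]

lemma gaussBinomZ_eq_zero {M : ℕ} {k : ℤ} (h : ¬(0 ≤ k ∧ k ≤ M)) :
    gaussBinomZ M k = 0 := by
  unfold gaussBinomZ
  split_ifs with hk
  · exact gaussBinom_eq_zero (by omega)
  · rfl

lemma X_pow_mul_gaussBinomZ_congr {M : ℕ} {k : ℤ} {s t : ℕ}
    (h : 0 ≤ k → k ≤ M → s = t) :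
    X ^ s * gaussBinomZ M k = X ^ t * gaussBinomZ M k := by
  by_cases hk : 0 ≤ k ∧ k ≤ M
  · rw [h hk.1 hk.2]
  · simp [gaussBinomZ_eq_zero hk]

lemma gaussBinomZ_of_nonpos {M N : ℕ} {k : ℤ} (hk : k ≤ 0) :
    gaussBinomZ M k = gaussBinomZ N k := by
  rcases hk.lt_or_eq with hk | rfl
  · rw [gaussBinomZ_eq_zero (by omega), gaussBinomZ_eq_zero (by omega)]
  · simp [gaussBinomZ, gaussBinom_zero_right]

lemma gaussBinomZ_succ (M : ℕ) (k : ℤ) :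
    gaussBinomZ (M + 1) k = gaussBinomZ M k + X ^ (M + 1 - k).toNat * gaussBinomZ M (k - 1) := by
  obtain ⟨K, rfl⟩ | hk : (∃ K : ℕ, k = K + 1) ∨ k ≤ 0 := by
    rcases le_or_gt k 0 with hk | hk
    exacts [Or.inr hk, Or.inl ⟨(k - 1).toNat, by omega⟩]
  · rw [add_sub_cancel_right, ← Nat.cast_add_one, gaussBinomZ_natCast, gaussBinomZ_natCast,
      gaussBinomZ_natCast, gaussBinom_succ_succ]
    congr 3
    omega
  · rw [gaussBinomZ_of_nonpos hk (N := M), gaussBinomZ_eq_zero (k := k - 1) (by omega), mul_zero,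
      add_zero]

lemma gaussBinomZ_succ' (M : ℕ) (k : ℤ) :
    gaussBinomZ (M + 1) k = X ^ k.toNat * gaussBinomZ M k + gaussBinomZ M (k - 1) := by
  obtain ⟨K, rfl⟩ | hk : (∃ K : ℕ, k = K + 1) ∨ k ≤ 0 := by
    rcases le_or_gt k 0 with hk | hk
    exacts [Or.inr hk, Or.inl ⟨(k - 1).toNat, by omega⟩]
  · rw [add_sub_cancel_right, ← Nat.cast_add_one, gaussBinomZ_natCast, gaussBinomZ_natCast,
      gaussBinomZ_natCast, gaussBinom_succ_succ', Int.toNat_natCast]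
  · rw [gaussBinomZ_of_nonpos hk (N := M), gaussBinomZ_eq_zero (k := k - 1) (by omega), add_zero,
      X_pow_mul_gaussBinomZ_congr (t := 0) (by omega), pow_zero, one_mul]

/-- `q^e [M choose k]_q`. The exponent is truncated at `0`, which is why the Pascal rules
for `gaussTerm` assume `0 ≤ e`. -/
noncomputable def gaussTerm (e : ℤ) (M : ℕ) (k : ℤ) : ℤ[X] :=
  X ^ e.toNat * gaussBinomZ M k

section gaussTerm

variable {e : ℤ} (M : ℕ) (k : ℤ)

lemma gaussTerm_succ (he : 0 ≤ e) :
    gaussTerm e (M + 1) k = gaussTerm e M k + gaussTerm (e + (M + 1 - k)) M (k - 1) := by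
  rw [gaussTerm, gaussBinomZ_succ, mul_add, ← mul_assoc, ← pow_add, gaussTerm, gaussTerm]
  congr 1
  exact X_pow_mul_gaussBinomZ_congr fun _ _ => by omega

lemma gaussTerm_succ' (he : 0 ≤ e) :
    gaussTerm e (M + 1) k = gaussTerm (e + k) M k + gaussTerm e M (k - 1) := by
  rw [gaussTerm, gaussBinomZ_succ', mul_add, ← mul_assoc, ← pow_add, gaussTerm, gaussTerm]
  congr 1
  exact X_pow_mul_gaussBinomZ_congr fun _ _ => by omega

lemma X_pow_mul_gaussTerm (he : 0 ≤ e) (a : ℕ) :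
    X ^ a * gaussTerm e M k = gaussTerm (e + a) M k := by
  rw [gaussTerm, gaussTerm, ← mul_assoc, ← pow_add]
  congr 2
  omega

end gaussTerm

lemma hasFiniteSupport_gaussTerm (e : ℤ → ℤ) (M : ℕ) (a : ℤ) {b : ℤ} (hb : b ≠ 0) :
    HasFiniteSupport fun j => gaussTerm (e j) M (a + b * j) := by
  refine ((Set.finite_Icc (0 : ℤ) M).preimage
    ((add_right_injective a).comp (mul_right_injective₀ hb)).injOn).subset fun j hj => ?_
  by_contra h
  rw [mem_support, gaussTerm, gaussBinomZ_eq_zero (by simpa using h), mul_zero] at hj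
  exact hj rfl

lemma Int.mul_add_one_nonneg (j : ℤ) : 0 ≤ j * (j + 1) := by
  rcases le_or_gt 0 j with h | h <;> nlinarith

-- `A_n(j)`, `B_n(j)` and `h_n(j)`.
noncomputable def evenRowPair (n : ℕ) (j : ℤ) : ℤ[X] :=
  gaussTerm (10 * j ^ 2 - j) (2 * n) (n + 5 * j) -
    gaussTerm (10 * j ^ 2 + 9 * j + 2) (2 * n) (n + 2 + 5 * j)

noncomputable def oddRowPair (n : ℕ) (j : ℤ) : ℤ[X] :=
  gaussTerm (10 * j ^ 2 - j) (2 * n + 1) (n + 5 * j) -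
    gaussTerm (10 * j ^ 2 + 9 * j + 2) (2 * n + 1) (n + 3 + 5 * j)

noncomputable def telescopingTerm (n : ℕ) (j : ℤ) : ℤ[X] :=
  gaussTerm (10 * j ^ 2 - 6 * j + n + 2) (2 * n + 1) (n - 1 + 5 * j)

lemma evenRowPair_succ (n : ℕ) (j : ℤ) :
    evenRowPair (n + 1) j = oddRowPair n j + X ^ (2 * n + 1) * evenRowPair n j := by
  have hj := Int.mul_add_one_nonneg j
  have h1 := gaussTerm_succ' (e := 10 * j ^ 2 - j) (2 * n + 1) (n + 1 + 5 * j) (by nlinarith)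
  have h2 := gaussTerm_succ (e := 10 * j ^ 2 + 9 * j + 2) (2 * n + 1) (n + 3 + 5 * j)
    (by nlinarith)
  have h3 := gaussTerm_succ (e := 10 * j ^ 2 + 4 * j + n + 1) (2 * n) (n + 1 + 5 * j)
    (by nlinarith)
  have h4 := gaussTerm_succ' (e := 10 * j ^ 2 + 4 * j + n + 1) (2 * n) (n + 2 + 5 * j)
    (by nlinarith)
  rw [evenRowPair, evenRowPair, oddRowPair, mul_sub, X_pow_mul_gaussTerm _ _ (by nlinarith),
    X_pow_mul_gaussTerm _ _ (by nlinarith)]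
  linear_combination (norm := (push_cast; ring_nf)) h1 + h3 - h2 - h4

lemma oddRowPair_succ (n : ℕ) (j : ℤ) :
    oddRowPair (n + 1) j = evenRowPair (n + 1) j + X ^ (2 * n + 2) * oddRowPair n j +
      (telescopingTerm n j - telescopingTerm n (j + 1)) := by
  have hj := Int.mul_add_one_nonneg j
  have h1 := gaussTerm_succ (e := 10 * j ^ 2 - j) (2 * n + 2) (n + 1 + 5 * j) (by nlinarith)
  have h2 := gaussTerm_succ' (e := 10 * j ^ 2 + 9 * j + 2) (2 * n + 2) (n + 4 + 5 * j)
    (by nlinarith)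
  have h3 := gaussTerm_succ' (e := 10 * j ^ 2 - 6 * j + n + 2) (2 * n + 1) (n + 5 * j)
    (by nlinarith)
  have h4 := gaussTerm_succ (e := 10 * j ^ 2 + 14 * j + n + 6) (2 * n + 1) (n + 4 + 5 * j)
    (by nlinarith)
  rw [oddRowPair, oddRowPair, evenRowPair, telescopingTerm, telescopingTerm, mul_sub,
    X_pow_mul_gaussTerm _ _ (by nlinarith), X_pow_mul_gaussTerm _ _ (by nlinarith)]
  linear_combination (norm := (push_cast; ring_nf)) h1 + h3 - h2 - h4

lemma hasFiniteSupport_evenRowPair (n : ℕ) : HasFiniteSupport (evenRowPair n) :=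
  (hasFiniteSupport_gaussTerm _ _ _ (by norm_num)).sub
    (hasFiniteSupport_gaussTerm _ _ _ (by norm_num))

lemma hasFiniteSupport_oddRowPair (n : ℕ) : HasFiniteSupport (oddRowPair n) :=
  (hasFiniteSupport_gaussTerm _ _ _ (by norm_num)).sub
    (hasFiniteSupport_gaussTerm _ _ _ (by norm_num))

lemma hasFiniteSupport_telescopingTerm (n : ℕ) : HasFiniteSupport (telescopingTerm n) :=
  hasFiniteSupport_gaussTerm _ _ _ (by norm_num)

lemma finsum_sub_add_one {G : Type*} [AddCommGroup G] {f : ℤ → G} (hf : HasFiniteSupport f) :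
    ∑ᶠ j, (f j - f (j + 1)) = 0 := by
  have hshift := finsum_comp_equiv (Equiv.addRight (1 : ℤ)) (f := f)
  rw [Equiv.coe_addRight] at hshift
  rw [finsum_sub_distrib hf (hf.fun_comp_of_injective (add_left_injective 1)), hshift, sub_self]

lemma finsum_evenRowPair_zero : ∑ᶠ j, evenRowPair 0 j = 1 := by
  rw [finsum_eq_single _ 0 fun j hj => ?_]
  · simp [evenRowPair, gaussTerm, gaussBinomZ, gaussBinom_zero_right, gaussBinom_eq_zero]
  · rw [evenRowPair, gaussTerm, gaussTerm, gaussBinomZ_eq_zero (by omega),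
      gaussBinomZ_eq_zero (by omega), mul_zero, mul_zero, sub_zero]

lemma finsum_oddRowPair_zero : ∑ᶠ j, oddRowPair 0 j = 1 := by
  rw [finsum_eq_single _ 0 fun j hj => ?_]
  · simp [oddRowPair, gaussTerm, gaussBinomZ, gaussBinom_zero_right, gaussBinom_eq_zero]
  · rw [oddRowPair, gaussTerm, gaussTerm, gaussBinomZ_eq_zero (by omega),
      gaussBinomZ_eq_zero (by omega), mul_zero, mul_zero, sub_zero]

lemma finsum_rowPairs (F' : ℕ → ℤ[X]) (hF0 : F' 0 = 0) (hF1 : F' 1 = 1)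
    (hFrec : ∀ k, F' (k + 2) = F' (k + 1) + X ^ k * F' k) (n : ℕ) :
    ∑ᶠ j, evenRowPair n j = F' (2 * n + 1) ∧ ∑ᶠ j, oddRowPair n j = F' (2 * n + 2) := by
  induction n with
  | zero => simp [finsum_evenRowPair_zero, finsum_oddRowPair_zero, hFrec 0, hF0, hF1]
  | succ n ih =>
    have hEven : ∑ᶠ j, evenRowPair (n + 1) j = F' (2 * (n + 1) + 1) := by
      simp_rw [evenRowPair_succ]
      rw [finsum_add_distrib (hasFiniteSupport_oddRowPair n)
          ((hasFiniteSupport_evenRowPair n).fun_mul_right _), ← mul_finsum, ih.1, ih.2]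
      exact (hFrec (2 * n + 1)).symm
    refine ⟨hEven, ?_⟩
    simp_rw [oddRowPair_succ]
    have hT := hasFiniteSupport_telescopingTerm n
    rw [finsum_add_distrib ((hasFiniteSupport_evenRowPair (n + 1)).fun_add
        ((hasFiniteSupport_oddRowPair n).fun_mul_right _))
        (hT.fun_sub (hT.fun_comp_of_injective (add_left_injective 1))),
      finsum_sub_add_one hT, add_zero,
      finsum_add_distrib (hasFiniteSupport_evenRowPair (n + 1))
        ((hasFiniteSupport_oddRowPair n).fun_mul_right _), ← mul_finsum, hEven, ih.2]
    exact (hFrec (2 * n + 2)).symm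

lemma finsum_eq_finsum_two_mul_add {M : Type*} [AddCommMonoid M] {f : ℤ → M}
    (hf₀ : HasFiniteSupport fun j => f (2 * j))
    (hf₁ : HasFiniteSupport fun j => f (2 * j + 1)) :
    ∑ᶠ i, f i = ∑ᶠ j, (f (2 * j) + f (2 * j + 1)) := by
  have hf : HasFiniteSupport f := by
    refine ((hf₀.image (2 * ·)).union (hf₁.image (2 * · + 1))).subset fun i hi => ?_
    obtain ⟨j, rfl | rfl⟩ := Int.even_or_odd' i
    exacts [Or.inl ⟨j, hi, rfl⟩, Or.inr ⟨j, hi, rfl⟩]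
  rw [← finsum_comp_equiv (Int.divModEquiv 2).symm,
    finsum_curry _ (hf.fun_comp_of_injective (Int.divModEquiv 2).symm.injective)]
  refine finsum_congr fun j => ?_
  rw [finsum_eq_sum_of_fintype, Fin.sum_univ_two]
  simp [mul_comm]

lemma colFun_two_mul (n : ℕ) (r off j : ℤ) : colFun n r off (2 * j) = n + r * j := by
  simp [colFun]

lemma colFun_two_mul_add_one (n : ℕ) (r off j : ℤ) :
    colFun n r off (2 * j + 1) = n + off + r * j := by
  simp [colFun]

noncomputable def eulerCharTerm (n : ℕ) (i : ℤ) : ℤ[X] :=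
  C ((Int.negOnePow i : ℤˣ) : ℤ) * X ^ ((5 * i ^ 2 - i) / 2).toNat *
    gaussBinomZ (2 * n) (colFun n 5 2 i)

lemma eulerCharTerm_two_mul (n : ℕ) (j : ℤ) :
    eulerCharTerm n (2 * j) = gaussTerm (10 * j ^ 2 - j) (2 * n) (n + 5 * j) := by
  rw [eulerCharTerm, colFun_two_mul, Int.negOnePow_two_mul,
    show 5 * (2 * j) ^ 2 - 2 * j = (10 * j ^ 2 - j) * 2 by ring, Int.mul_ediv_cancel _ two_ne_zero,
    gaussTerm]
  simp

lemma eulerCharTerm_two_mul_add_one (n : ℕ) (j : ℤ) :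
    eulerCharTerm n (2 * j + 1) = -gaussTerm (10 * j ^ 2 + 9 * j + 2) (2 * n) (n + 2 + 5 * j) := by
  rw [eulerCharTerm, colFun_two_mul_add_one, Int.negOnePow_two_mul_add_one,
    show 5 * (2 * j + 1) ^ 2 - (2 * j + 1) = (10 * j ^ 2 + 9 * j + 2) * 2 by ring,
    Int.mul_ediv_cancel _ two_ne_zero, gaussTerm]
  simp

/-- The modified q-Euler characteristic for N = 5, partition 5 = 2 + 3, with the
second Rogers–Ramanujan exponents (5i² − i)/2 equals the q-Fibonacci polynomial
F'(2n+1), where F'(0) = 0, F'(1) = 1 and F'(k+2) = F'(k+1) + q^k·F'(k):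
Σ_{i∈ℤ} (−1)^i · q^((5i² − i)/2) · [2n choose c(i)]_q = F'(2n+1),
where c(2j) = n + 5j and c(2j + 1) = n + 2 + 5j. -/
theorem q_euler_char_N_five_partition_two_three (n : ℕ)
    (F' : ℕ → Polynomial ℤ) (hF0 : F' 0 = 0) (hF1 : F' 1 = 1)
    (hFrec : ∀ k, F' (k + 2) = F' (k + 1) + X ^ k * F' k) :
    ∑ᶠ i : ℤ, (C ((Int.negOnePow i : ℤˣ) : ℤ) *
      X ^ ((5 * i ^ 2 - i) / 2).toNat * gaussBinomZ (2 * n) (colFun n 5 2 i)) =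
      F' (2 * n + 1) := by
  change ∑ᶠ i, eulerCharTerm n i = _
  have hEven : HasFiniteSupport fun j => eulerCharTerm n (2 * j) := by
    simpa only [eulerCharTerm_two_mul] using hasFiniteSupport_gaussTerm _ (2 * n) n (by norm_num)
  have hOdd : HasFiniteSupport fun j => eulerCharTerm n (2 * j + 1) := by
    simpa only [eulerCharTerm_two_mul_add_one] using
      (hasFiniteSupport_gaussTerm _ (2 * n) (n + 2) (by norm_num)).fun_neg
  rw [finsum_eq_finsum_two_mul_add hEven hOdd, ← (finsum_rowPairs F' hF0 hF1 hFrec n).1]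
  refine finsum_congr fun j => ?_
  rw [eulerCharTerm_two_mul, eulerCharTerm_two_mul_add_one, evenRowPair, ← sub_eq_add_neg]
end
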